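/- The number of join-irreducible elements of the dominance lattice of partitions of n grows as Θ(n²); specifically, it equals n²/6 + O(n). -/

import Mathlib

def IsPartition (n : ℕ) (a : ℕ → ℕ) : Prop :=
  (∀ i j, i ≤ j → a j ≤ a i) ∧ (∑ i ∈ Finset.range n, a i = n) ∧ (∀ i, n ≤ i → a i = 0)

def Dom (a b : ℕ → ℕ) : Prop :=
  ∀ j, ∑ i ∈ Finset.range j, a i ≤ ∑ i ∈ Finset.range j, b i

def IsSupOf (n : ℕ) (a b c : ℕ → ℕ) : Prop :=
  IsPartition n c ∧ Dom a c ∧ Dom b c ∧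
    ∀ d, IsPartition n d → Dom a d → Dom b d → Dom c d

def IsInfOf (n : ℕ) (a b c : ℕ → ℕ) : Prop :=
  IsPartition n c ∧ Dom c a ∧ Dom c b ∧
    ∀ d, IsPartition n d → Dom d a → Dom d b → Dom d c

/-- The minimum partition (1,1,…,1) of n. -/
def ones (n : ℕ) : ℕ → ℕ := fun i => if i < n then 1 else 0

/-- A partition of n is join-irreducible in the dominance lattice: it is not
the minimum and whenever it is the join of two partitions it equals one of them. -/
def JoinIrr (n : ℕ) (a : ℕ → ℕ) : Prop :=
  IsPartition n a ∧ a ≠ ones n ∧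
    ∀ b c, IsPartition n b → IsPartition n c → IsSupOf n b c a → a = b ∨ a = c

/-! The dominance order on partitions of `n` is a finite meet-semilattice (take the pointwise
minimum of prefix sums), so a partition is join-irreducible iff the partitions strictly below it
have a greatest element. Moving one unit from a part to a later part produces partitions just
below `a`; two independent such moves rule out a greatest element. Walking along the runs of equal
parts, the partitions that survive are exactly `v^μ (v-1)^k 1^l` with `v ≥ 2`, `μ ≥ 1`, `v ≥ 3` if
`k > 0`, and `v ≥ 4` if `k, l > 0`; for these, one particular move gives a partition above all
partitions strictly below. Recording `s = μ + k` and `m = μ v + k (v - 1)` identifies them with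
pairs `(s, m)` which, up to `O(n)` exceptions, are the pairs with `1 ≤ s` and `3 s < m < n`:
about `n² / 6` of them. -/

/-! ### Join-irreducibles of a finite meet-semilattice -/

section FiniteSemilattice

variable {α : Type*}

lemma IsGreatest.eq_or_eq_of_isLUB_pair [PartialOrder α] {a b c m : α}
    (hm : IsGreatest (Set.Iio a) m) (h : IsLUB {b, c} a) : a = b ∨ a = c := by
  by_contra! hne
  have hb : b ≤ m := hm.2 ((h.1 (by simp)).lt_of_ne hne.1.symm)
  have hc : c ≤ m := hm.2 ((h.1 (by simp)).lt_of_ne hne.2.symm)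
  exact lt_irrefl m (hm.1.trans_le (h.2 (by simp [hb, hc])))

/-- Take `b` maximal below `a`. If some `c₀ < a` is not below `b`, a maximal `c ≥ c₀` below `a`
gives `a = b ⊔ c`: for an upper bound `d` of `b, c`, maximality of `b` forces `a ⊓ d = a`. -/
lemma exists_isGreatest_Iio_of_isLUB_pair [SemilatticeInf α] [Finite α] {a : α}
    (ha : ¬IsMin a) (h : ∀ b c, IsLUB {b, c} a → a = b ∨ a = c) :
    ∃ m, IsGreatest (Set.Iio a) m := by
  obtain ⟨b₀, hb₀⟩ := not_isMin_iff.1 ha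
  obtain ⟨b, -, hb⟩ := Finite.exists_le_maximal (p := (· < a)) hb₀
  refine ⟨b, hb.1, fun c₀ hc₀ => ?_⟩
  by_contra hc₀b
  obtain ⟨c, hc₀c, hc⟩ := Finite.exists_le_maximal (p := (· < a)) hc₀
  have hcb : ¬c ≤ b := fun hcb => hc₀b (hc₀c.trans hcb)
  have hlub : IsLUB {b, c} a := by
    refine ⟨by simp [hb.1.le, hc.1.le], fun d hd => ?_⟩
    simp only [upperBounds_insert, upperBounds_singleton, Set.mem_inter_iff, Set.mem_Ici] at hd
    by_contra had
    have hlt : a ⊓ d < a := inf_le_left.lt_of_ne fun he => had (he ▸ inf_le_right)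
    exact hcb ((le_inf hc.1.le hd.2).trans (hb.2 hlt (le_inf hb.1.le hd.1)))
  rcases h b c hlub with rfl | rfl
  · exact lt_irrefl _ hb.1
  · exact lt_irrefl _ hc.1

end FiniteSemilattice

/-! ### The dominance order on partitions -/

open Finset

def partialSum (a : ℕ → ℕ) (j : ℕ) : ℕ := ∑ i ∈ range j, a i

@[simp] lemma partialSum_zero (a : ℕ → ℕ) : partialSum a 0 = 0 := rfl

lemma partialSum_succ (a : ℕ → ℕ) (j : ℕ) : partialSum a (j + 1) = partialSum a j + a j :=
  sum_range_succ a j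

lemma partialSum_add (a : ℕ → ℕ) (i j : ℕ) :
    partialSum a (i + j) = partialSum a i + partialSum (fun t => a (i + t)) j :=
  sum_range_add a i j

lemma partialSum_mono (a : ℕ → ℕ) : Monotone (partialSum a) :=
  fun _ _ h => sum_le_sum_of_subset (range_subset_range.2 h)

lemma partialSum_eq_mul {a : ℕ → ℕ} {c j : ℕ} (h : ∀ i < j, a i = c) : partialSum a j = j * c := by
  rw [partialSum, sum_congr rfl fun i hi => h i (mem_range.1 hi)]
  simp

lemma partialSum_le_partialSum {a b : ℕ → ℕ} {j : ℕ} (h : ∀ i < j, a i ≤ b i) :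
    partialSum a j ≤ partialSum b j :=
  sum_le_sum fun i hi => h i (mem_range.1 hi)

lemma partialSum_le_mul {a : ℕ → ℕ} {c j : ℕ} (h : ∀ i < j, a i ≤ c) : partialSum a j ≤ j * c :=
  (partialSum_le_partialSum (b := fun _ => c) h).trans_eq (partialSum_eq_mul fun _ _ => rfl)

lemma partialSum_eq_of_forall_le_eq_zero {a : ℕ → ℕ} {j t : ℕ} (hz : ∀ i, j ≤ i → a i = 0)
    (h : j ≤ t) : partialSum a t = partialSum a j := by
  obtain ⟨d, rfl⟩ := Nat.exists_eq_add_of_le h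
  rw [partialSum_add, partialSum_eq_mul fun i _ => hz (j + i) (Nat.le_add_right j i)]
  simp

lemma eq_of_partialSum_eq {a b : ℕ → ℕ} (h : ∀ j, partialSum a j = partialSum b j) : a = b := by
  funext i
  have := h (i + 1)
  rw [partialSum_succ, partialSum_succ, h i] at this
  omega

lemma Dom.partialSum_le {a b : ℕ → ℕ} (h : Dom a b) (j : ℕ) : partialSum a j ≤ partialSum b j :=
  h j

namespace IsPartition

variable {n : ℕ} {a : ℕ → ℕ}

lemma antitone (ha : IsPartition n a) : Antitone a := ha.1

lemma eq_zero (ha : IsPartition n a) {i : ℕ} (hi : n ≤ i) : a i = 0 := ha.2.2 i hi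

lemma partialSum_of_le (ha : IsPartition n a) {j : ℕ} (hj : n ≤ j) : partialSum a j = n :=
  (partialSum_eq_of_forall_le_eq_zero ha.2.2 hj).trans ha.2.1

lemma partialSum_le (ha : IsPartition n a) (j : ℕ) : partialSum a j ≤ n :=
  (partialSum_mono a (le_max_left j n)).trans (ha.partialSum_of_le (le_max_right j n)).le

lemma apply_le (ha : IsPartition n a) (i : ℕ) : a i ≤ n := by
  have := ha.partialSum_le (i + 1)
  rw [partialSum_succ] at this
  omega

end IsPartition

lemma partialSum_ones (n j : ℕ) : partialSum (ones n) j = min j n := by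
  induction j with
  | zero => rfl
  | succ j ih =>
    rw [partialSum_succ, ih, ones]
    split <;> omega

lemma isPartition_ones (n : ℕ) : IsPartition n (ones n) := by
  refine ⟨fun i j hij => ?_, ?_, fun i hi => if_neg (not_lt.2 hi)⟩
  · simp only [ones]
    split <;> split <;> omega
  · change partialSum (ones n) n = n
    rw [partialSum_ones, min_self]

lemma IsPartition.min_le_partialSum {n : ℕ} {a : ℕ → ℕ} (ha : IsPartition n a) (j : ℕ) :
    min j n ≤ partialSum a j := by
  induction j with
  | zero => simp
  | succ j ih =>
    rw [partialSum_succ]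
    rcases Nat.eq_zero_or_pos (a j) with h0 | hpos
    · have hz : ∀ i, j ≤ i → a i = 0 := fun i hi => Nat.eq_zero_of_le_zero (h0 ▸ ha.antitone hi)
      have := partialSum_eq_of_forall_le_eq_zero hz (le_max_left j n)
      rw [ha.partialSum_of_le (le_max_right j n)] at this
      omega
    · omega

def domMeet (u v : ℕ → ℕ) : ℕ → ℕ := fun i =>
  min (partialSum u (i + 1)) (partialSum v (i + 1)) - min (partialSum u i) (partialSum v i)

lemma partialSum_domMeet (u v : ℕ → ℕ) (j : ℕ) :
    partialSum (domMeet u v) j = min (partialSum u j) (partialSum v j) := by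
  induction j with
  | zero => rfl
  | succ j ih =>
    rw [partialSum_succ, ih, domMeet, partialSum_succ u, partialSum_succ v]
    omega

lemma IsPartition.domMeet {n : ℕ} {u v : ℕ → ℕ} (hu : IsPartition n u) (hv : IsPartition n v) :
    IsPartition n (domMeet u v) := by
  refine ⟨antitone_nat_of_succ_le fun i => ?_, ?_, fun i hi => ?_⟩
  · have := hu.antitone (Nat.le_add_right i 1)
    have := hv.antitone (Nat.le_add_right i 1)
    simp only [_root_.domMeet, partialSum_succ u, partialSum_succ v]
    omega
  · change partialSum (_root_.domMeet u v) n = n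
    rw [partialSum_domMeet, hu.partialSum_of_le le_rfl, hv.partialSum_of_le le_rfl, min_self]
  · simp [_root_.domMeet, hu.partialSum_of_le hi, hv.partialSum_of_le hi,
      hu.partialSum_of_le (Nat.le_succ_of_le hi), hv.partialSum_of_le (Nat.le_succ_of_le hi)]

@[ext]
structure DomPartition (n : ℕ) where
  parts : ℕ → ℕ
  isPartition : IsPartition n parts

namespace DomPartition

variable {n : ℕ}

instance : SemilatticeInf (DomPartition n) where
  le a b := Dom a.parts b.parts
  le_refl _ _ := le_rfl
  le_trans _ _ _ hab hbc j := (hab j).trans (hbc j)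
  le_antisymm a b hab hba := DomPartition.ext <|
    eq_of_partialSum_eq fun j => le_antisymm (hab j) (hba j)
  inf a b := ⟨domMeet a.parts b.parts, a.isPartition.domMeet b.isPartition⟩
  inf_le_left a b j := (partialSum_domMeet a.parts b.parts j).trans_le (min_le_left _ _)
  inf_le_right a b j := (partialSum_domMeet a.parts b.parts j).trans_le (min_le_right _ _)
  le_inf a b c hab hac j := (le_min (hab j) (hac j)).trans_eq (partialSum_domMeet _ _ j).symm

lemma le_iff {a b : DomPartition n} : a ≤ b ↔ Dom a.parts b.parts := Iff.rfl

lemma lt_iff {a b : DomPartition n} : a < b ↔ Dom a.parts b.parts ∧ a.parts ≠ b.parts := by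
  rw [lt_iff_le_and_ne, le_iff, Ne, DomPartition.ext_iff]

instance : Finite (DomPartition n) :=
  Finite.of_injective
    (fun a (i : Fin n) => (⟨a.parts i, Nat.lt_succ_of_le (a.isPartition.apply_le i)⟩ : Fin (n + 1)))
    fun a b h => by
      ext i
      rcases lt_or_ge i n with hi | hi
      · simpa using congrFun h ⟨i, hi⟩
      · rw [a.isPartition.eq_zero hi, b.isPartition.eq_zero hi]

instance : OrderBot (DomPartition n) where
  bot := ⟨ones n, isPartition_ones n⟩
  bot_le a j := (partialSum_ones n j).trans_le (IsPartition.min_le_partialSum a.isPartition j)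

lemma eq_bot_of_le_one (a : DomPartition n) (h : a.parts 0 ≤ 1) : a = ⊥ := by
  refine le_bot_iff.1 fun j => ?_
  change partialSum a.parts j ≤ partialSum (ones n) j
  have h1 : ∀ i, a.parts i ≤ 1 := fun i => (a.isPartition.antitone (Nat.zero_le i)).trans h
  have := partialSum_le_mul fun i (_ : i < j) => h1 i
  rw [partialSum_ones]
  have := a.isPartition.partialSum_le j
  omega

lemma isSupOf_iff_isLUB {a b c : DomPartition n} :
    IsSupOf n b.parts c.parts a.parts ↔ IsLUB {b, c} a := by
  simp only [IsSupOf, IsLUB, IsLeast, upperBounds_insert, upperBounds_singleton, mem_lowerBounds,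
    Set.mem_inter_iff, Set.mem_Ici, and_imp]
  exact ⟨fun h => ⟨⟨h.2.1, h.2.2.1⟩, fun d hb hc => h.2.2.2 d.parts d.isPartition hb hc⟩,
    fun h => ⟨a.isPartition, h.1.1, h.1.2, fun d hd hb hc => h.2 ⟨d, hd⟩ hb hc⟩⟩

end DomPartition

lemma joinIrr_iff {n : ℕ} {a : ℕ → ℕ} :
    JoinIrr n a ↔
      ∃ ha : IsPartition n a, ∃ m, IsGreatest (Set.Iio (⟨a, ha⟩ : DomPartition n)) m := by
  constructor
  · rintro ⟨ha, hne, hsup⟩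
    refine ⟨ha, exists_isGreatest_Iio_of_isLUB_pair ?_ fun b c h => ?_⟩
    · rw [isMin_iff_eq_bot]
      exact fun h => hne (congrArg DomPartition.parts h)
    · rcases hsup b.parts c.parts b.isPartition c.isPartition (DomPartition.isSupOf_iff_isLUB.2 h)
        with h | h
      · exact Or.inl (DomPartition.ext h)
      · exact Or.inr (DomPartition.ext h)
  · rintro ⟨ha, m, hm⟩
    refine ⟨ha, fun h => ?_, fun b c hb hc h => ?_⟩
    · have : (⟨a, ha⟩ : DomPartition n) = ⊥ := DomPartition.ext h
      exact not_lt_bot (this ▸ hm.1 : m < ⊥)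
    · have := hm.eq_or_eq_of_isLUB_pair
        (DomPartition.isSupOf_iff_isLUB (b := ⟨b, hb⟩) (c := ⟨c, hc⟩) |>.1 h)
      simpa [DomPartition.ext_iff] using this

/-! ### Moves -/

def moveOne (a : ℕ → ℕ) (i j : ℕ) : ℕ → ℕ :=
  fun t => if t = i then a i - 1 else if t = j then a j + 1 else a t

/-- These conditions are what keeps `moveOne a i j` nonincreasing when `a` is. -/
def IsMove (a : ℕ → ℕ) (i j : ℕ) : Prop :=
  i < j ∧ a j + 2 ≤ a i ∧ (i + 1 < j → a (i + 1) < a i ∧ a j < a (j - 1))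

section Move

variable {a : ℕ → ℕ} {i j : ℕ}

lemma moveOne_apply_left : moveOne a i j i = a i - 1 := if_pos rfl

lemma moveOne_apply_right (h : i ≠ j) : moveOne a i j j = a j + 1 := by
  simp [moveOne, h.symm]

lemma moveOne_apply_of_ne {t : ℕ} (hi : t ≠ i) (hj : t ≠ j) : moveOne a i j t = a t := by
  simp [moveOne, hi, hj]

lemma partialSum_moveOne (hij : i < j) (hi : 1 ≤ a i) (t : ℕ) :
    partialSum (moveOne a i j) t + (if i < t ∧ t ≤ j then 1 else 0) = partialSum a t := by
  induction t with
  | zero => simp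
  | succ t ih =>
    rw [partialSum_succ, partialSum_succ]
    rcases eq_or_ne t i with rfl | hti
    · rw [moveOne_apply_left]
      split_ifs at ih ⊢ <;> omega
    rcases eq_or_ne t j with rfl | htj
    · rw [moveOne_apply_right hij.ne]
      split_ifs at ih ⊢ <;> omega
    · rw [moveOne_apply_of_ne hti htj]
      split_ifs at ih ⊢ <;> omega

lemma IsMove.partialSum_of_mem (h : IsMove a i j) {t : ℕ} (ht : i < t ∧ t ≤ j) :
    partialSum (moveOne a i j) t + 1 = partialSum a t := by
  simpa [ht] using partialSum_moveOne h.1 (by have := h.2.1; omega) t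

lemma IsMove.partialSum_of_not_mem (h : IsMove a i j) {t : ℕ} (ht : ¬(i < t ∧ t ≤ j)) :
    partialSum (moveOne a i j) t = partialSum a t := by
  simpa [ht] using partialSum_moveOne h.1 (by have := h.2.1; omega) t

lemma IsMove.dom (h : IsMove a i j) : Dom (moveOne a i j) a := fun t => by
  by_cases ht : i < t ∧ t ≤ j
  · exact (Nat.le_succ _).trans (h.partialSum_of_mem ht).le
  · exact (h.partialSum_of_not_mem ht).le

lemma IsMove.lt_of_isPartition {n : ℕ} (h : IsMove a i j) (ha : IsPartition n a) : j < n := by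
  have hlast : 1 ≤ a (j - 1) := by
    rcases eq_or_lt_of_le (show i + 1 ≤ j from h.1) with hj | hj
    · rw [← hj, Nat.add_sub_cancel]; have := h.2.1; omega
    · have := (h.2.2 hj).2; omega
  have : ∑ t ∈ range j, (1 + if t = i then 1 else 0) ≤ partialSum a j :=
    sum_le_sum fun t ht => by
      have := ha.antitone (Nat.le_sub_one_of_lt (mem_range.1 ht))
      split_ifs with hti
      · subst hti; have := h.2.1; omega
      · omega
  rw [sum_add_distrib, sum_ite_eq' (range j) i, if_pos (mem_range.2 h.1)] at this
  simp only [sum_const, card_range, smul_eq_mul, mul_one] at this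
  have := ha.partialSum_le j
  omega

lemma IsPartition.moveOne {n : ℕ} (ha : IsPartition n a) (h : IsMove a i j) :
    IsPartition n (moveOne a i j) := by
  obtain ⟨hij, hgap, hslide⟩ := h
  refine ⟨antitone_nat_of_succ_le fun t => ?_, ?_, fun t ht => ?_⟩
  · have hstep := ha.antitone (Nat.le_add_right t 1)
    rcases eq_or_ne t i with rfl | hti
    · rw [moveOne_apply_left]
      rcases eq_or_ne (t + 1) j with rfl | htj
      · rw [moveOne_apply_right hij.ne]; omega
      · rw [moveOne_apply_of_ne (by omega) htj]; have := (hslide (by omega)).1; omega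
    rcases eq_or_ne t j with rfl | htj
    · rw [moveOne_apply_right hij.ne, moveOne_apply_of_ne (by omega) (by omega)]; omega
    rw [moveOne_apply_of_ne hti htj]
    rcases eq_or_ne (t + 1) i with hi | hi
    · rw [hi, moveOne_apply_left]; rw [hi] at hstep; omega
    rcases eq_or_ne (t + 1) j with hj | hj
    · rw [hj, moveOne_apply_right hij.ne]
      have := (hslide (by omega)).2
      rw [show j - 1 = t by omega] at this
      omega
    · rw [moveOne_apply_of_ne hi hj]; exact hstep
  · change partialSum (_root_.moveOne a i j) n = n
    rw [IsMove.partialSum_of_not_mem ⟨hij, hgap, hslide⟩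
      (by have := IsMove.lt_of_isPartition ⟨hij, hgap, hslide⟩ ha; omega),
      ha.partialSum_of_le le_rfl]
  · have := IsMove.lt_of_isPartition ⟨hij, hgap, hslide⟩ ha
    rw [moveOne_apply_of_ne (by omega) (by omega), ha.eq_zero ht]

end Move

namespace DomPartition

variable {n : ℕ} {i j : ℕ}

def move (a : DomPartition n) (h : IsMove a.parts i j) : DomPartition n :=
  ⟨moveOne a.parts i j, a.isPartition.moveOne h⟩

lemma move_lt (a : DomPartition n) (h : IsMove a.parts i j) : a.move h < a := by
  refine lt_iff.2 ⟨h.dom, fun he => ?_⟩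
  have := congrFun he i
  simp only [DomPartition.move, moveOne_apply_left] at this
  have := h.2.1
  omega

/-- At a point `j = i' + 1` shared by the two ranges of changed prefix sums, concavity of the
prefix sums of `m` recovers the lost unit. -/
lemma not_isGreatest_of_isMove (a : DomPartition n) {i' j' : ℕ} (h : IsMove a.parts i j)
    (h' : IsMove a.parts i' j') (hsep : j ≤ i' + 1) (hadj : j = i' + 1 → a.parts i' = a.parts j + 1)
    (m : DomPartition n) : ¬IsGreatest (Set.Iio a) m := by
  intro hm
  have hma : m < a := hm.1
  have hbm : Dom (moveOne a.parts i j) m.parts := hm.2 (a.move_lt h)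
  have hcm : Dom (moveOne a.parts i' j') m.parts := hm.2 (a.move_lt h')
  refine lt_irrefl a (lt_of_le_of_lt (fun t => ?_) hma)
  change partialSum a.parts t ≤ partialSum m.parts t
  by_cases ht : i < t ∧ t ≤ j
  · by_cases ht' : i' < t ∧ t ≤ j'
    · obtain rfl : t = i' + 1 := by omega
      obtain rfl : j = i' + 1 := by omega
      have := h'.partialSum_of_not_mem (t := i') (by omega)
      have := h.partialSum_of_not_mem (t := i' + 1 + 1) (by omega)
      have := hbm.partialSum_le (i' + 1 + 1)
      have := hcm.partialSum_le i'
      have := m.isPartition.antitone (Nat.le_add_right i' 1)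
      have := hadj rfl
      have := partialSum_succ a.parts (i' + 1)
      have := partialSum_succ a.parts i'
      have := partialSum_succ m.parts (i' + 1)
      have := partialSum_succ m.parts i'
      omega
    · exact (h'.partialSum_of_not_mem ht').symm.trans_le (hcm t)
  · exact (h.partialSum_of_not_mem ht).symm.trans_le (hbm t)

lemma isGreatest_move (a : DomPartition n) (h : IsMove a.parts i j)
    (hrigid : ∀ x ≤ a, ∀ t, i < t → t ≤ j → partialSum x.parts t = partialSum a.parts t → x = a) :
    IsGreatest (Set.Iio a) (a.move h) := by
  refine ⟨a.move_lt h, fun x (hx : x < a) t => ?_⟩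
  change partialSum x.parts t ≤ partialSum (moveOne a.parts i j) t
  by_cases ht : i < t ∧ t ≤ j
  · have h₁ := h.partialSum_of_mem ht
    have h₂ : partialSum x.parts t ≤ partialSum a.parts t := hx.le t
    have h₃ : partialSum x.parts t ≠ partialSum a.parts t :=
      fun he => hx.ne (hrigid x hx.le t ht.1 ht.2 he)
    omega
  · rw [h.partialSum_of_not_mem ht]
    exact hx.le t

end DomPartition

/-- A strict inequality at `u` propagates to `u + 1`: otherwise `x u > a u ≥ s`, so
`x ≥ s + 1 ≥ a` on `[L, u]`, contradicting equality at `L`. -/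
lemma partialSum_eq_of_dom {x a : ℕ → ℕ} (hx : Antitone x) (hxa : Dom x a) {L K s : ℕ}
    (ha : ∀ i, L ≤ i → i < K → s ≤ a i ∧ a i ≤ s + 1)
    (hL : partialSum x L = partialSum a L) (hK : partialSum x K = partialSum a K)
    {t : ℕ} (hLt : L ≤ t) (htK : t ≤ K) : partialSum x t = partialSum a t := by
  by_contra hne
  have key : ∀ u, t ≤ u → u ≤ K → partialSum x u < partialSum a u := by
    intro u htu
    induction u, htu using Nat.le_induction with
    | base => exact fun _ => lt_of_le_of_ne (hxa.partialSum_le t) hne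
    | succ u htu ih =>
      intro huK
      have hlt := ih (by omega)
      by_contra hge
      have := (ha u (by omega) (by omega)).1
      have := hxa.partialSum_le (u + 1)
      have := partialSum_succ x u
      have := partialSum_succ a u
      obtain ⟨d, rfl⟩ := Nat.exists_eq_add_of_le (hLt.trans htu)
      have : partialSum (fun i => a (L + i)) d ≤ partialSum (fun i => x (L + i)) d :=
        partialSum_le_partialSum fun i hi =>
          (ha (L + i) (by omega) (by omega)).2.trans
            (by have := hx (show L + i ≤ L + d by omega); omega)
      rw [partialSum_add, partialSum_add] at hlt
      omega
  exact absurd (key K htK le_rfl) (by omega)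

namespace DomPartition

variable {n : ℕ}

lemma eq_of_le_of_partialSum_eq {x a : DomPartition n} (hxa : x ≤ a) {t s : ℕ}
    (ht : partialSum x.parts t = partialSum a.parts t)
    (hbefore : ∀ i < t, s ≤ a.parts i ∧ a.parts i ≤ s + 1) (hafter : ∀ i, t ≤ i → a.parts i ≤ 1) :
    x = a := by
  have hx := x.isPartition
  have ha := a.isPartition
  ext1
  refine eq_of_partialSum_eq fun j => ?_
  rcases le_total j t with hj | hj
  · exact partialSum_eq_of_dom hx.antitone hxa (fun i _ hi => hbefore i hi) rfl ht
      (Nat.zero_le j) hj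
  rcases le_total j (t + n) with hj' | hj'
  · refine partialSum_eq_of_dom hx.antitone hxa (s := 0)
      (fun i hi _ => ⟨Nat.zero_le _, hafter i hi⟩) ht ?_ hj hj'
    rw [hx.partialSum_of_le (by omega), ha.partialSum_of_le (by omega)]
  · rw [hx.partialSum_of_le (by omega), ha.partialSum_of_le (by omega)]

lemma exists_isGreatest_of_isMove (a : DomPartition n) {i j s : ℕ} (h : IsMove a.parts i j)
    (hbefore : ∀ r < j, s ≤ a.parts r ∧ a.parts r ≤ s + 1) (hafter : ∀ r, i < r → a.parts r ≤ 1) :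
    ∃ m, IsGreatest (Set.Iio a) m :=
  ⟨_, a.isGreatest_move h fun _ hx _ h₁ h₂ ht => eq_of_le_of_partialSum_eq hx ht
    (fun r hr => hbefore r (by omega)) (fun r hr => hafter r (by omega))⟩

end DomPartition

/-! ### The join-irreducible partitions -/

/-- The partition `v^μ (v-1)^k 1^l`. -/
def stairs (v μ k l : ℕ) : ℕ → ℕ := fun i =>
  if i < μ then v else if i < μ + k then v - 1 else if i < μ + k + l then 1 else 0

section Stairs

variable {v μ k l i : ℕ}

lemma stairs_of_lt (h : i < μ) : stairs v μ k l i = v := if_pos h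

lemma stairs_of_mem_middle (h₁ : μ ≤ i) (h₂ : i < μ + k) : stairs v μ k l i = v - 1 := by
  simp [stairs, h₂, not_lt.2 h₁]

lemma stairs_of_mem_tail (h₁ : μ + k ≤ i) (h₂ : i < μ + k + l) : stairs v μ k l i = 1 := by
  simp [stairs, h₂, not_lt.2 h₁, show ¬i < μ by omega]

lemma stairs_of_le (h : μ + k + l ≤ i) : stairs v μ k l i = 0 := by
  simp [stairs, show ¬i < μ by omega, show ¬i < μ + k by omega, not_lt.2 h]

lemma stairs_mem_of_lt (h : i < μ + k) :
    v - 1 ≤ stairs v μ k l i ∧ stairs v μ k l i ≤ v - 1 + 1 := by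
  rcases lt_or_ge i μ with h' | h'
  · rw [stairs_of_lt h']; omega
  · rw [stairs_of_mem_middle h' h]; omega

lemma stairs_le_one (h : μ + k ≤ i) : stairs v μ k l i ≤ 1 := by
  rcases lt_or_ge i (μ + k + l) with h' | h'
  · rw [stairs_of_mem_tail h h']
  · rw [stairs_of_le h']; omega

lemma partialSum_stairs_middle : partialSum (stairs v μ k l) (μ + k) = μ * v + k * (v - 1) := by
  rw [partialSum_add, partialSum_eq_mul fun i => stairs_of_lt,
    partialSum_eq_mul fun i hi => stairs_of_mem_middle (Nat.le_add_right μ i) (by omega)]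

lemma partialSum_stairs {t : ℕ} (h : μ + k + l ≤ t) :
    partialSum (stairs v μ k l) t = μ * v + k * (v - 1) + l := by
  rw [partialSum_eq_of_forall_le_eq_zero (fun i => stairs_of_le) h, partialSum_add,
    partialSum_stairs_middle,
    partialSum_eq_mul fun i hi => stairs_of_mem_tail (by omega) (by omega), mul_one]

lemma isPartition_stairs {n : ℕ} (hv : 2 ≤ v) (hn : μ * v + k * (v - 1) + l = n) :
    IsPartition n (stairs v μ k l) := by
  have hle : μ + k + l ≤ n := by
    have := Nat.le_mul_of_pos_right μ (show 0 < v by omega)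
    have := Nat.le_mul_of_pos_right k (show 0 < v - 1 by omega)
    omega
  refine ⟨fun i j hij => ?_, (partialSum_stairs hle).trans hn, fun i hi => stairs_of_le (by omega)⟩
  simp only [stairs]
  split_ifs <;> omega

lemma IsPartition.sum_eq_of_stairs {n : ℕ} (h : IsPartition n (stairs v μ k l)) :
    μ * v + k * (v - 1) + l = n :=
  (partialSum_stairs (le_max_left _ n)).symm.trans (h.partialSum_of_le (le_max_right _ n))

end Stairs

structure IsJoinIrrParam (n v μ k l : ℕ) : Prop where
  two_le : 2 ≤ v
  pos : 0 < μ
  three_le : 0 < k → 3 ≤ v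
  four_le : 0 < k → 0 < l → 4 ≤ v
  sum_eq : μ * v + k * (v - 1) + l = n

namespace IsJoinIrrParam

variable {n v μ k l : ℕ}

lemma isPartition (h : IsJoinIrrParam n v μ k l) : IsPartition n (stairs v μ k l) :=
  isPartition_stairs h.two_le h.sum_eq

/-- For `v = 2` the last `2` slides down past the ones, otherwise a unit drops from the last
part `≥ 2` to the next one; every partition below `stairs` agreeing with it at a prefix sum
in between is forced to be `stairs` itself. -/
theorem exists_isGreatest (h : IsJoinIrrParam n v μ k l) :
    ∃ m, IsGreatest (Set.Iio (⟨stairs v μ k l, h.isPartition⟩ : DomPartition n)) m := by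
  have hμ := h.pos
  rcases (show v = 2 ∨ 3 ≤ v by have := h.two_le; omega) with rfl | hv
  · obtain rfl : k = 0 := by by_contra hk; have := h.three_le (by omega); omega
    have e₁ : stairs 2 μ 0 l (μ - 1) = 2 := stairs_of_lt (by omega)
    have e₂ : stairs 2 μ 0 l (μ + l) = 0 := stairs_of_le (by omega)
    refine DomPartition.exists_isGreatest_of_isMove _ (i := μ - 1) (j := μ + l) (s := 1)
      ⟨by omega, by dsimp only; omega, fun hl => ?_⟩ (fun r hr => ?_)
      fun r hr => stairs_le_one (by omega)
    · have : stairs 2 μ 0 l (μ - 1 + 1) = 1 := stairs_of_mem_tail (by omega) (by omega)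
      have : stairs 2 μ 0 l (μ + l - 1) = 1 := stairs_of_mem_tail (by omega) (by omega)
      dsimp only
      omega
    · rcases lt_or_ge r μ with hr' | hr'
      · simp [stairs_of_lt hr']
      · simp [stairs_of_mem_tail (show μ + 0 ≤ r by omega) (show r < μ + 0 + l by omega)]
  · have hgap : stairs v μ k l (μ + k) + 2 ≤ stairs v μ k l (μ + k - 1) := by
      rcases Nat.eq_zero_or_pos k with rfl | hk
      · rw [stairs_of_lt (i := μ + 0 - 1) (by omega)]
        have := stairs_le_one (v := v) (μ := μ) (k := 0) (l := l) le_rfl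
        omega
      rw [stairs_of_mem_middle (i := μ + k - 1) (by omega) (by omega)]
      rcases Nat.eq_zero_or_pos l with rfl | hl
      · rw [stairs_of_le (by omega)]; omega
      · rw [stairs_of_mem_tail le_rfl (by omega)]; have := h.four_le hk hl; omega
    exact DomPartition.exists_isGreatest_of_isMove _ (i := μ + k - 1) (j := μ + k) (s := v - 1)
      ⟨by omega, hgap, by omega⟩ (fun r hr => stairs_mem_of_lt hr)
      fun r hr => stairs_le_one (by omega)

end IsJoinIrrParam

lemma Antitone.exists_run_end {a : ℕ → ℕ} (ha : Antitone a) {p : ℕ} (h : ∃ q, a q < a p) :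
    ∃ f, p < f ∧ a f < a p ∧ ∀ i, p ≤ i → i < f → a i = a p := by
  classical
  refine ⟨Nat.find h, ?_, Nat.find_spec h, fun i hpi hi => le_antisymm (ha hpi) ?_⟩
  · by_contra! hle
    exact (Nat.find_spec h).not_ge (ha hle)
  · exact not_lt.1 (Nat.find_min h hi)

lemma isMove_pred {a : ℕ → ℕ} {f : ℕ} (hf : 0 < f) (h : a f + 2 ≤ a (f - 1)) :
    IsMove a (f - 1) f :=
  ⟨by omega, h, fun h' => absurd h' (by omega)⟩

namespace IsPartition

variable {n : ℕ} {a : ℕ → ℕ}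

lemma exists_run_end (ha : IsPartition n a) {p : ℕ} (hp : 0 < a p) :
    ∃ f, p < f ∧ a f < a p ∧ ∀ i, p ≤ i → i < f → a i = a p :=
  ha.antitone.exists_run_end ⟨n, by rw [ha.eq_zero le_rfl]; exact hp⟩

lemma exists_isMove_of_eq_succ (ha : IsPartition n a) {p : ℕ} (hp : 0 < a (p + 1))
    (h : a p = a (p + 1) + 1) : ∃ i j, p ≤ i ∧ IsMove a i j := by
  obtain ⟨f, hpf, hlt, hrun⟩ := ha.exists_run_end hp
  have hf : a (f - 1) = a (p + 1) := hrun (f - 1) (by omega) (by omega)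
  by_cases hgap : a f + 2 ≤ a (p + 1)
  · exact ⟨f - 1, f, by omega, isMove_pred (by omega) (by omega)⟩
  · exact ⟨p, f, le_rfl, by omega, by omega, fun _ => ⟨by omega, by omega⟩⟩

lemma exists_isMove_of_two_le (ha : IsPartition n a) {p : ℕ} (hp : 2 ≤ a p) :
    ∃ i j, p ≤ i ∧ IsMove a i j := by
  obtain ⟨f, hpf, hlt, hrun⟩ := ha.exists_run_end (show 0 < a p by omega)
  have hf : a (f - 1) = a p := hrun (f - 1) (by omega) (by omega)
  by_cases hgap : a f + 2 ≤ a p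
  · exact ⟨f - 1, f, by omega, isMove_pred (by omega) (by omega)⟩
  · obtain ⟨i, j, hi, hmv⟩ := ha.exists_isMove_of_eq_succ (p := f - 1)
      (by rw [Nat.sub_add_cancel (by omega)]; omega) (by rw [Nat.sub_add_cancel (by omega)]; omega)
    exact ⟨i, j, by omega, hmv⟩

lemma exists_eq_stairs (ha : IsPartition n a) {v μ k : ℕ} (h₁ : ∀ i < μ, a i = v)
    (h₂ : ∀ i, μ ≤ i → i < μ + k → a i = v - 1) (h₃ : a (μ + k) ≤ 1) :
    ∃ l, a = stairs v μ k l := by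
  classical
  have hex : ∃ r, μ + k ≤ r ∧ a r = 0 := ⟨μ + k + n, by omega, ha.eq_zero (by omega)⟩
  obtain ⟨hr, hr0⟩ := Nat.find_spec hex
  refine ⟨Nat.find hex - (μ + k), funext fun i => ?_⟩
  rcases lt_or_ge i μ with hi | hi
  · rw [stairs_of_lt hi, h₁ i hi]
  rcases lt_or_ge i (μ + k) with hi' | hi'
  · rw [stairs_of_mem_middle hi hi', h₂ i hi hi']
  rcases lt_or_ge i (Nat.find hex) with hi'' | hi''
  · rw [stairs_of_mem_tail hi' (by omega)]
    have := Nat.find_min hex hi''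
    have := ha.antitone hi'
    omega
  · rw [stairs_of_le (by omega)]
    have := ha.antitone hi''
    omega

end IsPartition

/-- Walking down the runs of equal parts: unless `a` is a `stairs`, we find two moves as in
`not_isGreatest_of_isMove`. -/
theorem DomPartition.exists_isJoinIrrParam {n : ℕ} (a : DomPartition n)
    (hm : ∃ m, IsGreatest (Set.Iio a) m) :
    ∃ v μ k l, IsJoinIrrParam n v μ k l ∧ a.parts = stairs v μ k l := by
  obtain ⟨m, hm⟩ := hm
  have ha := a.isPartition
  have hsep : ∀ {i j i' j'}, IsMove a.parts i j → IsMove a.parts i' j' → j ≤ i' + 1 →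
      (j = i' + 1 → a.parts i' = a.parts j + 1) → False :=
    fun h h' hs hadj => a.not_isGreatest_of_isMove h h' hs hadj m hm
  have hv : 2 ≤ a.parts 0 := by
    by_contra! h
    exact not_lt_bot (a.eq_bot_of_le_one (by omega) ▸ hm.1 : m < ⊥)
  obtain ⟨μ, hμ, hμlt, hrun₁⟩ := ha.exists_run_end (p := 0) (by omega)
  have h₁ : ∀ i < μ, a.parts i = a.parts 0 := fun i hi => hrun₁ i (Nat.zero_le i) hi
  have hμ₁ : a.parts (μ - 1) = a.parts 0 := h₁ (μ - 1) (by omega)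
  by_cases hsmall : a.parts μ ≤ 1
  · obtain ⟨l, hl⟩ := ha.exists_eq_stairs (k := 0) h₁ (fun i hi hi' => by omega) hsmall
    exact ⟨_, μ, 0, l, ⟨hv, hμ, by omega, by omega, (hl ▸ ha).sum_eq_of_stairs⟩, hl⟩
  by_cases hgap₁ : a.parts μ + 2 ≤ a.parts 0
  · obtain ⟨i', j', hi', h'⟩ := ha.exists_isMove_of_two_le (p := μ) (by omega)
    exact (hsep (isMove_pred hμ (by omega)) h' (by omega) (by omega)).elim
  obtain ⟨μ₂, hμ₂, hμ₂lt, hrun₂⟩ := ha.exists_run_end (p := μ) (by omega)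
  have hμ₂₁ : a.parts (μ₂ - 1) = a.parts μ := hrun₂ (μ₂ - 1) (by omega) (by omega)
  by_cases hslide : a.parts μ₂ + 1 = a.parts μ
  · have h : IsMove a.parts (μ - 1) μ₂ :=
      ⟨by omega, by omega, fun _ => ⟨by rw [Nat.sub_add_cancel hμ]; omega, by omega⟩⟩
    obtain ⟨i', j', hi', h'⟩ := ha.exists_isMove_of_eq_succ (p := μ₂ - 1)
      (by rw [Nat.sub_add_cancel (by omega)]; omega) (by rw [Nat.sub_add_cancel (by omega)]; omega)
    refine (hsep h h' (by omega) fun hj => ?_).elim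
    rw [show i' = μ₂ - 1 by omega]
    omega
  by_cases hsmall₂ : 2 ≤ a.parts μ₂
  · obtain ⟨i', j', hi', h'⟩ := ha.exists_isMove_of_two_le hsmall₂
    exact (hsep (isMove_pred (f := μ₂) (by omega) (by omega)) h' (by omega) (by omega)).elim
  obtain ⟨l, hl⟩ := ha.exists_eq_stairs (k := μ₂ - μ) h₁
    (fun i hi hi' => by rw [hrun₂ i hi (by omega)]; omega)
    (by rw [Nat.add_sub_cancel' hμ₂.le]; omega)
  refine ⟨_, μ, μ₂ - μ, l, ⟨hv, hμ, fun _ => by omega, fun _ hl0 => ?_,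
    (hl ▸ ha).sum_eq_of_stairs⟩, hl⟩
  have : a.parts μ₂ = 1 := by
    rw [hl]; exact stairs_of_mem_tail (by omega) (by omega)
  omega

/-! ### Counting -/

def jiParams (n : ℕ) : Set (ℕ × ℕ × ℕ × ℕ) := {p | IsJoinIrrParam n p.1 p.2.1 p.2.2.1 p.2.2.2}

lemma setOf_joinIrr_eq_image (n : ℕ) :
    {a | JoinIrr n a} = (fun p : ℕ × ℕ × ℕ × ℕ => stairs p.1 p.2.1 p.2.2.1 p.2.2.2) ''
      jiParams n := by
  ext a
  constructor
  · intro h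
    obtain ⟨ha, hm⟩ := joinIrr_iff.1 h
    obtain ⟨v, μ, k, l, hp, hl⟩ := DomPartition.exists_isJoinIrrParam ⟨a, ha⟩ hm
    exact ⟨(v, μ, k, l), hp, hl.symm⟩
  · rintro ⟨⟨v, μ, k, l⟩, hp, rfl⟩
    exact joinIrr_iff.2 ⟨hp.isPartition, hp.exists_isGreatest⟩

lemma mul_add_mul_sub_one {v : ℕ} (hv : 1 ≤ v) (μ k : ℕ) :
    μ * v + k * (v - 1) = (μ + k) * (v - 1) + μ := by
  obtain ⟨w, rfl⟩ : ∃ w, v = w + 1 := ⟨v - 1, by omega⟩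
  simp only [Nat.add_sub_cancel]
  ring

/-- The number and the total size of the parts `≥ 2` of `stairs v μ k l`. -/
def largeParts (p : ℕ × ℕ × ℕ × ℕ) : ℕ × ℕ := (p.2.1 + p.2.2.1, p.2.1 * p.1 + p.2.2.1 * (p.1 - 1))

namespace IsJoinIrrParam

variable {n v μ k l : ℕ}

lemma two_le_stairs_iff (h : IsJoinIrrParam n v μ k l) {i : ℕ} :
    2 ≤ stairs v μ k l i ↔ i < μ + k := by
  refine ⟨fun hi => not_le.1 fun hle => ?_, fun hi => ?_⟩
  · have := stairs_le_one (v := v) (l := l) hle; omega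
  · rcases lt_or_ge i μ with h' | h'
    · rw [stairs_of_lt h']; exact h.two_le
    · rw [stairs_of_mem_middle h' hi]; have := h.three_le (by omega); omega

lemma div_mod (h : IsJoinIrrParam n v μ k l) :
    (μ * v + k * (v - 1) - 1) / (μ + k) = v - 1 ∧ (μ * v + k * (v - 1) - 1) % (μ + k) = μ - 1 := by
  have := h.pos
  refine (Nat.div_mod_unique (by omega)).2 ⟨?_, by omega⟩
  rw [mul_add_mul_sub_one (by have := h.two_le; omega)]
  have := Nat.le_mul_of_pos_right (μ + k) (show 0 < v - 1 by have := h.two_le; omega)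
  rw [mul_comm]
  omega

lemma eq_of_largeParts_eq {v' μ' k' l' : ℕ} (h : IsJoinIrrParam n v μ k l)
    (h' : IsJoinIrrParam n v' μ' k' l')
    (he : largeParts (v, μ, k, l) = largeParts (v', μ', k', l')) :
    (v, μ, k, l) = (v', μ', k', l') := by
  simp only [largeParts, Prod.mk.injEq] at he
  obtain ⟨hs, hm⟩ := he
  have e := h.div_mod
  have e' := h'.div_mod
  rw [hs, hm] at e
  have := h.sum_eq
  have := h'.sum_eq
  have := h.two_le
  have := h'.two_le
  have := h.pos
  have := h'.pos
  obtain rfl : v = v' := by omega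
  obtain rfl : μ = μ' := by omega
  obtain rfl : k = k' := by omega
  obtain rfl : l = l' := by omega
  rfl

lemma largeParts_eq_of_stairs_eq {v' μ' k' l' : ℕ} (h : IsJoinIrrParam n v μ k l)
    (h' : IsJoinIrrParam n v' μ' k' l') (he : stairs v μ k l = stairs v' μ' k' l') :
    largeParts (v, μ, k, l) = largeParts (v', μ', k', l') := by
  have hs : μ + k = μ' + k' := by
    refine le_antisymm (not_lt.1 fun hlt => ?_) (not_lt.1 fun hlt => ?_)
    · exact (h'.two_le_stairs_iff.not.2 (by omega)) (he ▸ h.two_le_stairs_iff.2 hlt)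
    · exact (h.two_le_stairs_iff.not.2 (by omega)) (he.symm ▸ h'.two_le_stairs_iff.2 hlt)
  simp only [largeParts, Prod.mk.injEq]
  refine ⟨hs, ?_⟩
  rw [← partialSum_stairs_middle (l := l), ← partialSum_stairs_middle (l := l'), hs, he]

end IsJoinIrrParam

def triangle (N : ℕ) : Finset (ℕ × ℕ) :=
  (range N ×ˢ range N).filter fun q => 0 < q.1 ∧ 3 * q.1 < q.2

def exceptionalPairs (n : ℕ) : Finset (ℕ × ℕ) :=
  (range (n + 1)).image (fun s => (s, n)) ∪ (range (n + 1)).image (fun s => (s, 2 * s)) ∪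
    (range (n + 1)).image (fun s => (s, 3 * s))

lemma ncard_setOf_joinIrr (n : ℕ) : {a | JoinIrr n a}.ncard = (largeParts '' jiParams n).ncard := by
  have hlarge : Set.InjOn largeParts (jiParams n) := by
    rintro ⟨v, μ, k, l⟩ hp ⟨v', μ', k', l'⟩ hq he
    exact IsJoinIrrParam.eq_of_largeParts_eq hp hq he
  have hstairs :
      Set.InjOn (fun p : ℕ × ℕ × ℕ × ℕ => stairs p.1 p.2.1 p.2.2.1 p.2.2.2) (jiParams n) := by
    rintro ⟨v, μ, k, l⟩ hp ⟨v', μ', k', l'⟩ hq he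
    exact hlarge hp hq (IsJoinIrrParam.largeParts_eq_of_stairs_eq hp hq he)
  rw [setOf_joinIrr_eq_image, hstairs.ncard_image, hlarge.ncard_image]

lemma triangle_subset_image_largeParts (n : ℕ) : ↑(triangle n) ⊆ largeParts '' jiParams n := by
  rintro ⟨s, m⟩ hsm
  simp only [triangle, coe_filter, mem_product, mem_range, Set.mem_ofPred_eq] at hsm
  obtain ⟨⟨-, hm⟩, hs, h3⟩ := hsm
  obtain ⟨q, r, hr, hqr⟩ : ∃ q r, r < s ∧ s * q + r = m - 1 :=
    ⟨(m - 1) / s, (m - 1) % s, Nat.mod_lt _ hs, Nat.div_add_mod _ _⟩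
  have hq : 3 ≤ q := by
    by_contra! hq
    have := Nat.mul_le_mul_left s (show q ≤ 2 by omega)
    omega
  have hsum : (r + 1) * (q + 1) + (s - (r + 1)) * (q + 1 - 1) = m := by
    rw [mul_add_mul_sub_one (by omega), Nat.add_sub_cancel' (by omega), Nat.add_sub_cancel]
    omega
  refine ⟨(q + 1, r + 1, s - (r + 1), n - m), (⟨by omega, by omega, fun _ => by omega,
    fun _ _ => by omega, by omega⟩ : IsJoinIrrParam n (q + 1) (r + 1) (s - (r + 1)) (n - m)), ?_⟩
  simp only [largeParts, Prod.mk.injEq]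
  exact ⟨by omega, hsum⟩

lemma image_largeParts_subset (n : ℕ) :
    largeParts '' jiParams n ⊆ ↑(triangle (n + 1) ∪ exceptionalPairs n) := by
  rintro _ ⟨⟨v, μ, k, l⟩, h, rfl⟩
  simp only [jiParams, Set.mem_ofPred_eq] at h
  have hv := h.two_le
  have hn := h.sum_eq
  have hm := mul_add_mul_sub_one (by omega : 1 ≤ v) μ k
  have hsm := Nat.le_mul_of_pos_right (μ + k) (show 0 < v - 1 by omega)
  simp only [largeParts, triangle, exceptionalPairs, coe_union, coe_filter, coe_image, mem_product,
    mem_range, Set.mem_union, Set.mem_ofPred_eq, Set.mem_image, mem_coe, Prod.mk.injEq]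
  by_cases h3 : 3 * (μ + k) < μ * v + k * (v - 1)
  · exact Or.inl ⟨⟨by omega, by omega⟩, by have := h.pos; omega, h3⟩
  right
  rcases Nat.eq_zero_or_pos l with hl | hl
  · exact Or.inl (Or.inl ⟨μ + k, by omega, rfl, by omega⟩)
  rcases Nat.eq_zero_or_pos k with rfl | hk
  · rcases (show v = 2 ∨ v = 3 ∨ 4 ≤ v by omega) with rfl | rfl | hv4
    · exact Or.inl (Or.inr ⟨μ + 0, by omega, rfl, by ring⟩)
    · exact Or.inr ⟨μ + 0, by omega, rfl, by ring⟩
    · have := Nat.mul_le_mul_left (μ + 0) (show 3 ≤ v - 1 by omega)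
      have := h.pos
      omega
  · have := Nat.mul_le_mul_left (μ + k) (show 3 ≤ v - 1 by have := h.four_le hk hl; omega)
    have := h.pos
    omega

lemma card_triangle (N : ℕ) : (triangle N).card = ∑ m ∈ range N, (m - 1) / 3 := by
  rw [triangle, card_filter, sum_product_right]
  refine sum_congr rfl fun m hm => ?_
  rw [← card_filter, show (range N).filter (fun s => 0 < s ∧ 3 * s < m) = Icc 1 ((m - 1) / 3) by
    ext s; simp only [mem_filter, mem_range, mem_Icc] at hm ⊢; omega, Nat.card_Icc]
  omega

lemma card_triangle_bounds (N : ℕ) :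
    6 * (triangle N).card ≤ N * N ∧ N * N ≤ 6 * (triangle N).card + 7 * N := by
  have hgauss := sum_range_id_mul_two N
  have hlo : ∑ m ∈ range N, 6 * ((m - 1) / 3) ≤ ∑ m ∈ range N, 2 * m :=
    sum_le_sum fun m _ => by omega
  have hhi : ∑ m ∈ range N, 2 * m ≤ ∑ m ∈ range N, (6 * ((m - 1) / 3) + 6) :=
    sum_le_sum fun m _ => by omega
  rw [← mul_sum, ← mul_sum] at hlo
  rw [sum_add_distrib, ← mul_sum, ← mul_sum, sum_const, card_range, smul_eq_mul] at hhi
  have hsq : N * N = N * (N - 1) + N := by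
    cases N with
    | zero => rfl
    | succ N => simp only [Nat.add_sub_cancel]; ring
  rw [card_triangle]
  omega

lemma card_exceptionalPairs_le (n : ℕ) : (exceptionalPairs n).card ≤ 3 * (n + 1) := by
  have h : ∀ f : ℕ → ℕ × ℕ, ((range (n + 1)).image f).card ≤ n + 1 :=
    fun f => card_image_le.trans_eq (card_range _)
  calc (exceptionalPairs n).card
      ≤ ((range (n + 1)).image fun s => (s, n)).card
        + ((range (n + 1)).image fun s => (s, 2 * s)).card
        + ((range (n + 1)).image fun s => (s, 3 * s)).card :=
        (card_union_le _ _).trans (Nat.add_le_add_right (card_union_le _ _) _)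
    _ ≤ 3 * (n + 1) := by
        have := h fun s => (s, n)
        have := h fun s => (s, 2 * s)
        have := h fun s => (s, 3 * s)
        omega

lemma ncard_setOf_joinIrr_bounds (n : ℕ) :
    n * n ≤ 6 * {a | JoinIrr n a}.ncard + 7 * n ∧
      6 * {a | JoinIrr n a}.ncard ≤ n * n + 20 * n + 19 := by
  have hlo : (triangle n).card ≤ {a | JoinIrr n a}.ncard := by
    rw [ncard_setOf_joinIrr, ← Set.ncard_coe_finset]
    exact Set.ncard_le_ncard (triangle_subset_image_largeParts n)
      ((triangle (n + 1) ∪ exceptionalPairs n).finite_toSet.subset (image_largeParts_subset n))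
  have hhi : {a | JoinIrr n a}.ncard ≤ (triangle (n + 1)).card + 3 * (n + 1) := by
    rw [ncard_setOf_joinIrr]
    calc (largeParts '' jiParams n).ncard ≤ (triangle (n + 1) ∪ exceptionalPairs n).card := by
          rw [← Set.ncard_coe_finset]; exact Set.ncard_le_ncard (image_largeParts_subset n)
      _ ≤ (triangle (n + 1)).card + 3 * (n + 1) := by
          have := card_union_le (triangle (n + 1)) (exceptionalPairs n)
          have := card_exceptionalPairs_le n
          omega
  have := card_triangle_bounds n
  have := card_triangle_bounds (n + 1)
  constructor
  · omega
  · have : (n + 1) * (n + 1) = n * n + 2 * n + 1 := by ring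
    omega

theorem abs_ncard_setOf_joinIrr_sub_le {n : ℕ} (hn : 1 ≤ n) :
    |({a | JoinIrr n a}.ncard : ℝ) - (n : ℝ) ^ 2 / 6| ≤ 7 * (n : ℝ) := by
  obtain ⟨hlo, hhi⟩ := ncard_setOf_joinIrr_bounds n
  have hlo' : (n : ℝ) * n ≤ 6 * {a | JoinIrr n a}.ncard + 7 * n := by exact_mod_cast hlo
  have hhi' : 6 * ({a | JoinIrr n a}.ncard : ℝ) ≤ n * n + 20 * n + 19 := by exact_mod_cast hhi
  have hn' : (1 : ℝ) ≤ n := by exact_mod_cast hn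
  rw [abs_le]
  constructor <;> nlinarith

/-- The number of join-irreducible elements of the dominance lattice of
partitions of n is Θ(n²); more precisely it equals n²/6 + O(n). -/
theorem stmt17 :
    (∃ c₁ c₂ : ℝ, 0 < c₁ ∧ 0 < c₂ ∧ ∃ N : ℕ, ∀ n : ℕ, N ≤ n →
      c₁ * (n : ℝ) ^ 2 ≤ (Set.ncard {a : ℕ → ℕ | JoinIrr n a} : ℝ) ∧
      (Set.ncard {a : ℕ → ℕ | JoinIrr n a} : ℝ) ≤ c₂ * (n : ℝ) ^ 2) ∧
    (∃ C : ℝ, ∀ n : ℕ, 1 ≤ n →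
      |(Set.ncard {a : ℕ → ℕ | JoinIrr n a} : ℝ) - (n : ℝ) ^ 2 / 6| ≤ C * n) := by
  refine ⟨⟨1 / 12, 1, by norm_num, by norm_num, 84, fun n hn => ?_⟩,
    ⟨7, fun n hn => abs_ncard_setOf_joinIrr_sub_le hn⟩⟩
  have h := abs_le.1 (abs_ncard_setOf_joinIrr_sub_le (show 1 ≤ n by omega))
  have hn' : (84 : ℝ) ≤ n := by exact_mod_cast hn
  constructor <;> nlinarith [h.1, h.2]
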